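/- Let 0 < α < 1, let ν be a probability measure on [0,∞) whose moments satisfy ∫_0^∞ τ^n dν(τ) = n! / Γ(αn+1) for every n ∈ ℕ, let (M, 𝓑) be a measurable space with a measure μ, and let φ_1, …, φ_N : M → ℝ be measurable functions such that x ↦ e^{i(φ_a(x) − φ_b(x))} − 1 is μ-integrable for all a, b ∈ {1,…,N}. Then the N × N complex matrix A with entries A_{ab} = E_α( ∫_M (e^{i(φ_a(x) − φ_b(x))} − 1) dμ(x) ) is positive semidefinite: for all z_1, …, z_N ∈ ℂ, the sum ∑_{a,b} conj(z_a) z_b A_{ab} is a nonnegative real number. -/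

import Mathlib

/-!
Integrating the exponential series term by term against the moment condition gives
`E_α(w) = ∫ e^{τ w} dν(τ)`, the interchange being justified by the superexponential growth of
`Γ(αn + 1)` that log-convexity of `Γ` provides. Since positive semidefinite matrices form a closed
convex cone, it suffices that `[e^{τ w_{ab}}]` is positive semidefinite for every `τ ≥ 0`, where
`w_{ab} = ∫ (f_a f̄_b - 1) dμ` with `f_a = e^{iφ_a}` unimodular. This is Schoenberg's argument:
for a base index `o`, `w_{ab} - w_{ob} - w_{ao} = ∫ (f_a - f_o)(f̄_b - f̄_o) dμ` is a Gram matrix,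
so `[e^{τ w_{ab}}]` is a diagonal congruence of the entrywise exponential of a positive semidefinite
matrix, which is positive semidefinite by the Schur product theorem.
-/

open MeasureTheory Complex
open scoped ComplexOrder

/-- The Mittag-Leffler function `E_α(z) = ∑ₙ zⁿ / Γ(αn+1)`. -/
noncomputable def mittagLeffler (α : ℝ) (z : ℂ) : ℂ :=
  ∑' n : ℕ, z ^ n / (Real.Gamma (α * n + 1) : ℂ)

namespace Real

theorem rpow_mul_Gamma_add_one_le_Gamma {x s : ℝ} (hx : 0 < x) (hs : 0 < s) :
    x ^ s * Gamma (x + 1) ≤ Gamma (x + 1 + s) := by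
  have hΓ : 0 < Gamma (x + 1) := Gamma_pos_of_pos (by linarith)
  have hΓs : 0 < Gamma (x + 1 + s) := Gamma_pos_of_pos (by linarith)
  have hslope : log x ≤ (log (Gamma (x + 1 + s)) - log (Gamma (x + 1))) / s := by
    have := convexOn_log_Gamma.slope_mono_adjacent (x := x) (y := x + 1) (z := x + 1 + s)
      hx (by simp only [Set.mem_Ioi]; linarith) (by linarith) (by linarith)
    simpa [Gamma_add_one hx.ne', log_mul hx.ne' (Gamma_pos_of_pos hx).ne'] using this
  rw [← le_div_iff₀ hΓ, rpow_def_of_pos hx, ← exp_log (div_pos hΓs hΓ), log_div hΓs.ne' hΓ.ne']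
  exact exp_le_exp.2 (by rw [le_div_iff₀ hs] at hslope; linarith)

theorem summable_pow_div_Gamma_mul_add_one {α : ℝ} (hα : 0 < α) (r : ℝ) :
    Summable fun n : ℕ => r ^ n / Gamma (α * n + 1) := by
  refine summable_of_ratio_norm_eventually_le (r := 1 / 2) (by norm_num) ?_
  have hgrowth : Filter.Tendsto (fun n : ℕ => (α * n) ^ α) Filter.atTop Filter.atTop :=
    (tendsto_rpow_atTop hα).comp ((tendsto_natCast_atTop_atTop (R := ℝ)).const_mul_atTop hα)
  filter_upwards [hgrowth.eventually_ge_atTop (2 * |r|), Filter.eventually_ge_atTop 1]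
    with n hn hn1
  have hx : 0 < α * n := mul_pos hα (by exact_mod_cast hn1)
  have hΓ : 0 < Gamma (α * n + 1) := Gamma_pos_of_pos (by linarith)
  have hΓsucc : 0 < Gamma (α * (n + 1 : ℕ) + 1) := Gamma_pos_of_pos (by positivity)
  have hratio : 2 * |r| * Gamma (α * n + 1) ≤ Gamma (α * (n + 1 : ℕ) + 1) := by
    rw [show α * ((n + 1 : ℕ) : ℝ) + 1 = α * n + 1 + α by push_cast; ring]
    exact (mul_le_mul_of_nonneg_right hn hΓ.le).trans (rpow_mul_Gamma_add_one_le_Gamma hx hα)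
  simp only [norm_div, norm_pow, norm_eq_abs, abs_of_pos hΓ, abs_of_pos hΓsucc]
  rw [div_le_iff₀ hΓsucc, pow_succ]
  calc |r| ^ n * |r|
      = 1 / 2 * (|r| ^ n / Gamma (α * n + 1)) * (2 * |r| * Gamma (α * n + 1)) := by field_simp
    _ ≤ _ := by gcongr

end Real

theorem mittagLeffler_eq_integral_exp {α : ℝ} (hα : 0 < α) {ν : Measure ℝ}
    (hν : ∀ᵐ τ ∂ν, 0 ≤ τ) (hmom_int : ∀ n : ℕ, Integrable (fun τ : ℝ => τ ^ n) ν)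
    (hmom : ∀ n : ℕ, ∫ τ, τ ^ n ∂ν = (Nat.factorial n : ℝ) / Real.Gamma (α * n + 1)) (w : ℂ) :
    mittagLeffler α w = ∫ τ : ℝ, exp (τ * w) ∂ν := by
  have hterm (n : ℕ) : (fun τ : ℝ => ((τ : ℂ) * w) ^ n / n.factorial) =
      fun τ => ((τ ^ n : ℝ) : ℂ) * (w ^ n / n.factorial) := by
    funext τ; push_cast; ring
  have hterm_int (n : ℕ) : Integrable (fun τ : ℝ => ((τ : ℂ) * w) ^ n / n.factorial) ν := by
    rw [hterm]; exact (hmom_int n).ofReal.mul_const _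
  have hterm_integral (n : ℕ) :
      ∫ τ : ℝ, ((τ : ℂ) * w) ^ n / n.factorial ∂ν = w ^ n / Real.Gamma (α * n + 1) := by
    have hΓ : (Real.Gamma (α * n + 1) : ℂ) ≠ 0 :=
      ofReal_ne_zero.2 (Real.Gamma_pos_of_pos (by positivity)).ne'
    rw [hterm, integral_mul_const, integral_complex_ofReal, hmom]
    push_cast
    field_simp [Nat.cast_ne_zero.2 n.factorial_ne_zero]
  have hterm_norm (n : ℕ) :
      ∫ τ : ℝ, ‖((τ : ℂ) * w) ^ n / n.factorial‖ ∂ν = ‖w‖ ^ n / Real.Gamma (α * n + 1) := by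
    have hΓ : Real.Gamma (α * n + 1) ≠ 0 := (Real.Gamma_pos_of_pos (by positivity)).ne'
    rw [integral_congr_ae (g := fun τ => τ ^ n * (‖w‖ ^ n / n.factorial)), integral_mul_const,
      hmom]
    · field_simp [Nat.cast_ne_zero.2 n.factorial_ne_zero]
    · filter_upwards [hν] with τ hτ
      simp [mul_pow, abs_of_nonneg hτ, mul_div_assoc]
  calc mittagLeffler α w = ∑' n : ℕ, ∫ τ : ℝ, ((τ : ℂ) * w) ^ n / n.factorial ∂ν := by
        simp only [mittagLeffler, hterm_integral]
    _ = ∫ τ : ℝ, ∑' n : ℕ, ((τ : ℂ) * w) ^ n / n.factorial ∂ν :=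
        integral_tsum_of_summable_integral_norm hterm_int
          (by simpa only [hterm_norm] using Real.summable_pow_div_Gamma_mul_add_one hα ‖w‖)
    _ = ∫ τ : ℝ, exp (τ * w) ∂ν := by
        simp only [exp_eq_exp_ℂ, NormedSpace.exp_eq_tsum_div]

namespace Matrix

variable {ι 𝕜 : Type*} [Fintype ι] [RCLike 𝕜]

theorem isClosed_setOf_posSemidef : IsClosed {A : Matrix ι ι 𝕜 | A.PosSemidef} := by
  simp only [posSemidef_iff_dotProduct_mulVec, Set.ofPred_and, Set.ofPred_forall]
  exact (isClosed_eq continuous_id.matrix_conjTranspose continuous_id).inter <|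
    isClosed_iInter fun x => isClosed_le continuous_const <|
      continuous_const.dotProduct (continuous_id.matrix_mulVec continuous_const)

theorem PosSemidef.map_pow {A : Matrix ι ι 𝕜} (hA : A.PosSemidef) (n : ℕ) :
    (A.map (· ^ n)).PosSemidef := by
  induction n with
  | zero =>
    convert posSemidef_vecMulVec_star_self (1 : ι → 𝕜) using 1
    ext a b
    simp [vecMulVec_apply]
  | succ n ih =>
    convert ih.hadamard hA using 1
    ext a b
    simp [pow_succ]

theorem PosSemidef.map_exp {A : Matrix ι ι ℂ} (hA : A.PosSemidef) : (A.map exp).PosSemidef := by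
  have hsum : HasSum (fun n : ℕ => (n.factorial⁻¹ : ℝ) • A.map (· ^ n)) (A.map exp) := by
    refine Pi.hasSum.2 fun a => Pi.hasSum.2 fun b => ?_
    simpa [exp_eq_exp_ℂ, NormedSpace.exp_eq_tsum_div, div_eq_inv_mul] using
      NormedSpace.exp_series_hasSum_exp' (𝕂 := ℂ) (A a b)
  refine isClosed_setOf_posSemidef.mem_of_tendsto hsum.tendsto_sum_nat <|
    Filter.Eventually.of_forall fun k => posSemidef_sum _ fun n _ => (hA.map_pow n).smul ?_
  positivity

theorem PosSemidef.exp_add_add_star {A : Matrix ι ι ℂ} (hA : A.PosSemidef) (u : ι → ℂ) :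
    (of fun a b => exp (A a b + u a + star (u b))).PosSemidef := by
  classical
  convert hA.map_exp.conjTranspose_mul_mul_same (diagonal fun b => exp (star (u b))) using 1
  ext a b
  simp [diagonal_mul, mul_diagonal, exp_add]
  ring

theorem IsHermitian.posSemidef_exp_mul {W : Matrix ι ι ℂ} (hW : W.IsHermitian) (o : ι)
    (hG : (of fun a b => W a b - W o b - W a o).PosSemidef) {τ : ℝ} (hτ : 0 ≤ τ) :
    (of fun a b => Complex.exp (τ * W a b)).PosSemidef := by
  convert (hG.smul hτ).exp_add_add_star (fun a => τ * W a o) using 1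
  ext a b
  simp only [of_apply, smul_apply, real_smul]
  rw [star_mul', hW.apply o b, star_def, conj_ofReal]
  ring_nf

variable {X : Type*} [MeasurableSpace X] {μ : Measure X}

theorem posSemidef_integral {F : X → Matrix ι ι 𝕜} (hF : ∀ a b, Integrable (fun x => F x a b) μ)
    (hpos : ∀ᵐ x ∂μ, (F x).PosSemidef) : (of fun a b => ∫ x, F x a b ∂μ).PosSemidef := by
  refine posSemidef_iff_dotProduct_mulVec.2 ⟨?_, fun z => ?_⟩
  · ext a b
    simp only [conjTranspose_apply, of_apply, RCLike.star_def, ← integral_conj]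
    refine integral_congr_ae ?_
    filter_upwards [hpos] with x hx
    exact hx.isHermitian.apply a b
  · have hquad : star z ⬝ᵥ (of (fun a b => ∫ x, F x a b ∂μ) *ᵥ z) =
        ∫ x, star z ⬝ᵥ (F x *ᵥ z) ∂μ := by
      simp only [dotProduct, mulVec, of_apply, Pi.star_apply]
      rw [integral_finsetSum _ fun a _ =>
        (integrable_finsetSum _ fun b _ => (hF a b).mul_const _).const_mul _]
      refine Finset.sum_congr rfl fun a _ => ?_
      rw [integral_const_mul, integral_finsetSum _ fun b _ => (hF a b).mul_const _]
      simp only [integral_mul_const]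
    rw [hquad]
    exact integral_nonneg_of_ae (hpos.mono fun x hx => hx.dotProduct_mulVec_nonneg z)

theorem posSemidef_integral_mul_star {g : ι → X → 𝕜}
    (hg : ∀ a b, Integrable (fun x => g a x * star (g b x)) μ) :
    (of fun a b => ∫ x, g a x * star (g b x) ∂μ).PosSemidef :=
  posSemidef_integral hg (ae_of_all _ fun x => posSemidef_vecMulVec_self_star (g · x))

theorem posSemidef_exp_mul_integral_mul_star_sub_one {f : ι → X → ℂ} (hf : ∀ a x, ‖f a x‖ = 1)
    (hint : ∀ a b, Integrable (fun x => f a x * star (f b x) - 1) μ) {τ : ℝ} (hτ : 0 ≤ τ) :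
    (of fun a b => exp ((τ : ℂ) * ∫ x, (f a x * star (f b x) - 1) ∂μ)).PosSemidef := by
  cases isEmpty_or_nonempty ι with
  | inl _ =>
    convert (PosSemidef.zero : (0 : Matrix ι ι ℂ).PosSemidef) using 1
    exact Subsingleton.elim _ _
  | inr hι =>
    obtain ⟨o⟩ := hι
    have hunit (x : X) : f o x * star (f o x) = 1 := by
      rw [star_def, mul_conj', hf, ofReal_one, one_pow]
    have hgram (a b : ι) (x : X) : (f a x - f o x) * star (f b x - f o x) =
        (f a x * star (f b x) - 1) - (f o x * star (f b x) - 1) - (f a x * star (f o x) - 1) := by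
      rw [star_sub]
      linear_combination hunit x
    refine IsHermitian.posSemidef_exp_mul (W := of fun a b => ∫ x, (f a x * star (f b x) - 1) ∂μ)
      ?_ o ?_ hτ
    · ext a b
      simp only [conjTranspose_apply, of_apply, star_def, ← integral_conj]
      congr 1 with x
      simp [mul_comm]
    · have hG : (of fun a b => ∫ x, (f a x * star (f b x) - 1) ∂μ
            - ∫ x, (f o x * star (f b x) - 1) ∂μ - ∫ x, (f a x * star (f o x) - 1) ∂μ) =
          of fun a b => ∫ x, (f a x - f o x) * star (f b x - f o x) ∂μ := by
        ext a b
        simp only [of_apply, hgram]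
        rw [integral_sub (f := fun x => f a x * star (f b x) - 1 - (f o x * star (f b x) - 1))
          ((hint a b).sub (hint o b)) (hint a o), integral_sub (hint a b) (hint o b)]
      simp only [of_apply]
      rw [hG]
      exact posSemidef_integral_mul_star fun a b => by
        simp only [hgram]; exact ((hint a b).sub (hint o b)).sub (hint a o)

end Matrix

theorem re_integral_sub_one_nonpos {X : Type*} [MeasurableSpace X] {μ : Measure X} {h : X → ℂ}
    (hh : ∀ x, ‖h x‖ ≤ 1) (hint : Integrable (fun x => h x - 1) μ) :
    (∫ x, (h x - 1) ∂μ).re ≤ 0 := by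
  rw [← RCLike.re_to_complex, ← integral_re hint]
  exact integral_nonpos fun x => by simpa using (re_le_norm (h x)).trans (hh x)

theorem integrable_exp_mul_of_re_nonpos {ν : Measure ℝ} [IsFiniteMeasure ν]
    (hν : ∀ᵐ τ ∂ν, 0 ≤ τ) {w : ℂ} (hw : w.re ≤ 0) : Integrable (fun τ : ℝ => exp (τ * w)) ν := by
  refine (integrable_const (1 : ℝ)).mono' (by fun_prop) ?_
  filter_upwards [hν] with τ hτ
  simpa [norm_exp] using mul_nonpos_of_nonneg_of_nonpos hτ hw

theorem fractional_poisson_characteristic_posdef_general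
    (α : ℝ) (hα₁ : 0 < α)
    (ν : Measure ℝ) [IsProbabilityMeasure ν] (hsupp : ν (Set.Iio 0) = 0)
    (hmom_int : ∀ n : ℕ, Integrable (fun τ : ℝ => τ ^ n) ν)
    (hmom : ∀ n : ℕ, ∫ τ, τ ^ n ∂ν = (Nat.factorial n : ℝ) / Real.Gamma (α * n + 1))
    {M : Type*} [MeasurableSpace M] (μ : Measure M)
    (N : ℕ) (φ : Fin N → M → ℝ)
    (hint : ∀ a b, Integrable
      (fun x => Complex.exp (Complex.I * ((φ a x : ℂ) - (φ b x : ℂ))) - 1) μ)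
    (z : Fin N → ℂ) :
    0 ≤ ∑ a, ∑ b, (starRingEnd ℂ) (z a) * z b *
      mittagLeffler α (∫ x, (Complex.exp (Complex.I * ((φ a x : ℂ) - (φ b x : ℂ))) - 1) ∂μ) := by
  have hν : ∀ᵐ τ ∂ν, 0 ≤ τ := by
    rw [ae_iff]
    simp only [not_le]
    exact hsupp
  set f : Fin N → M → ℂ := fun a x => exp (φ a x * I)
  have hf (a : Fin N) (x : M) : ‖f a x‖ = 1 := norm_exp_ofReal_mul_I _
  have hphase (a b : Fin N) (x : M) :
      exp (I * (φ a x - φ b x)) - 1 = f a x * star (f b x) - 1 := by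
    simp only [f, star_def, ← exp_conj, ← exp_add, map_mul, conj_ofReal, conj_I]
    ring_nf
  simp only [hphase] at hint ⊢
  have hK : (Matrix.of fun a b =>
      ∫ τ : ℝ, exp (τ * ∫ x, (f a x * star (f b x) - 1) ∂μ) ∂ν).PosSemidef :=
    Matrix.posSemidef_integral
      (fun a b => integrable_exp_mul_of_re_nonpos hν <|
        re_integral_sub_one_nonpos (fun x => by simp [hf]) (hint a b))
      (hν.mono fun τ hτ => Matrix.posSemidef_exp_mul_integral_mul_star_sub_one hf hint hτ)
  simp only [mittagLeffler_eq_integral_exp hα₁ hν hmom_int hmom]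
  convert hK.dotProduct_mulVec_nonneg z using 1
  simp only [dotProduct, Matrix.mulVec, Matrix.of_apply, Pi.star_apply, Finset.mul_sum, star_def]
  exact Finset.sum_congr rfl fun a _ => Finset.sum_congr rfl fun b _ => by ring

/-- Positive semidefiniteness of the matrix `A_{ab} = E_α(∫ (e^{i(φ_a − φ_b)} − 1) dμ)`:
for all `z : Fin N → ℂ`, the sum `∑_{a,b} conj(z_a) z_b A_{ab}` is a nonnegative real
number (expressed via the partial order on `ℂ`: `0 ≤ w` iff `w` is real and nonnegative). -/
theorem fractional_poisson_characteristic_posdef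
    (α : ℝ) (hα₁ : 0 < α) (hα₂ : α < 1)
    (ν : Measure ℝ) [IsProbabilityMeasure ν] (hsupp : ν (Set.Iio 0) = 0)
    (hmom_int : ∀ n : ℕ, Integrable (fun τ : ℝ => τ ^ n) ν)
    (hmom : ∀ n : ℕ, ∫ τ, τ ^ n ∂ν = (Nat.factorial n : ℝ) / Real.Gamma (α * n + 1))
    {M : Type*} [MeasurableSpace M] (μ : Measure M)
    (N : ℕ) (φ : Fin N → M → ℝ) (hφ : ∀ a, Measurable (φ a))
    (hint : ∀ a b, Integrable
      (fun x => Complex.exp (Complex.I * ((φ a x : ℂ) - (φ b x : ℂ))) - 1) μ)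
    (z : Fin N → ℂ) :
    0 ≤ ∑ a, ∑ b, (starRingEnd ℂ) (z a) * z b *
      mittagLeffler α (∫ x, (Complex.exp (Complex.I * ((φ a x : ℂ) - (φ b x : ℂ))) - 1) ∂μ) :=
  fractional_poisson_characteristic_posdef_general α hα₁ ν hsupp hmom_int hmom μ N φ hint z
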